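/- Let f : ℝ^m × ℝ^n → ℝ be continuously differentiable and bounded below, and let μ > 0. Fix x̄ ∈ ℝ^m and suppose the minimizer set argmin_{y ∈ ℝ^n} ( f(x̄,y) + (μ/2)‖y‖² ) is a singleton {z*}. Then the regularized lower-level value function f_μ* is (Fréchet) differentiable at x̄ and its gradient equals the partial gradient of f in x evaluated at the minimizer: ∇f_μ*(x̄) = ∇_x f(x̄, z*). -/

import Mathlib

set_option maxHeartbeats 1000000


open Filter Topology

noncomputable section

/-- `ℝ^m` as a Euclidean space. -/
abbrev Evec (m : ℕ) := EuclideanSpace ℝ (Fin m)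

/-- The regularized lower-level value function
`f_μ*(x) = inf_y ( f(x,y) + (μ/2)‖y‖² )` (real-valued since `f` is bounded below
and the regularization term is nonnegative). -/
def fmuStar {m n : ℕ} (f : Evec m → Evec n → ℝ) (μ : ℝ) (x : Evec m) : ℝ :=
  sInf (Set.range fun y : Evec n => f x y + μ / 2 * ‖y‖ ^ 2)

end

/-- Existence of a minimizer for a continuous, bounded-below function plus a coercive
quadratic term. -/
lemma aux_exists_min {n : ℕ} (φ : Evec n → ℝ) (hφ : Continuous φ) {c μ : ℝ}
    (hbd : ∀ y, c ≤ φ y) (hμ : 0 < μ) :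
    ∃ y : Evec n, ∀ y', φ y + μ / 2 * ‖y‖ ^ 2 ≤ φ y' + μ / 2 * ‖y'‖ ^ 2 := by
  set ψ : Evec n → ℝ := fun y => φ y + μ / 2 * ‖y‖ ^ 2 with hψdef
  clear_value ψ
  have hψc : Continuous ψ := by
    rw [hψdef]; exact hφ.add (continuous_const.mul (continuous_norm.pow 2))
  have hψ0 : ψ 0 = φ 0 := by simp [hψdef]
  have h0c : c ≤ ψ 0 := hψ0 ▸ hbd 0
  set R : ℝ := Real.sqrt (2 * (ψ 0 - c) / μ) with hRdef
  clear_value R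
  have hR0 : 0 ≤ R := hRdef ▸ Real.sqrt_nonneg _
  have hRsq : μ / 2 * R ^ 2 = ψ 0 - c := by
    have harg : 0 ≤ 2 * (ψ 0 - c) / μ := div_nonneg (by linarith) hμ.le
    rw [hRdef, Real.sq_sqrt harg]
    field_simp
  obtain ⟨y₀, hy₀mem, hy₀⟩ := (isCompact_closedBall (0 : Evec n) R).exists_isMinOn
    ⟨0, Metric.mem_closedBall_self hR0⟩ hψc.continuousOn
  refine ⟨y₀, fun y' => ?_⟩
  have goal' : ψ y₀ ≤ ψ y' := by
    by_cases hy' : y' ∈ Metric.closedBall (0 : Evec n) R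
    · exact hy₀ hy'
    · have hy'R : R < ‖y'‖ := by
        simpa [Metric.mem_closedBall, dist_zero_right] using hy'
      have h1 : R ^ 2 < ‖y'‖ ^ 2 := by
        exact pow_lt_pow_left₀ hy'R hR0 (by norm_num)
      have h2 : ψ 0 ≤ ψ y' := by
        have hb := hbd y'
        have hy'v : ψ y' = φ y' + μ / 2 * ‖y'‖ ^ 2 := by rw [hψdef]
        have hmul : μ / 2 * R ^ 2 < μ / 2 * ‖y'‖ ^ 2 :=
          mul_lt_mul_of_pos_left h1 (by linarith)
        linarith
      have h3 : ψ y₀ ≤ ψ 0 := hy₀ (Metric.mem_closedBall_self hR0)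
      linarith
  have e1 : ψ y₀ = φ y₀ + μ / 2 * ‖y₀‖ ^ 2 := by rw [hψdef]
  have e2 : ψ y' = φ y' + μ / 2 * ‖y'‖ ^ 2 := by rw [hψdef]
  linarith

theorem gradient_of_regularized_value_function
    {m n : ℕ} (f : Evec m → Evec n → ℝ)
    (hf : ContDiff ℝ 1 fun p : Evec m × Evec n => f p.1 p.2)
    (hfbd : ∃ c : ℝ, ∀ x y, c ≤ f x y)
    (μ : ℝ) (hμ : 0 < μ) (xbar : Evec m) (zstar : Evec n)
    (hz : {y : Evec n | ∀ y' : Evec n,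
        f xbar y + μ / 2 * ‖y‖ ^ 2 ≤ f xbar y' + μ / 2 * ‖y'‖ ^ 2} = {zstar}) :
    HasGradientAt (fmuStar f μ) (gradient (fun x => f x zstar) xbar) xbar := by
  obtain ⟨c, hc⟩ := hfbd
  have hfc : Continuous fun p : Evec m × Evec n => f p.1 p.2 := hf.continuous
  set g : Evec m → Evec n → ℝ := fun x y => f x y + μ / 2 * ‖y‖ ^ 2 with hgdef
  clear_value g
  have hgeq : ∀ x y, g x y = f x y + μ / 2 * ‖y‖ ^ 2 := by intro x y; rw [hgdef]
  have hfmu : ∀ x, fmuStar f μ x = sInf (Set.range fun y : Evec n => g x y) := by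
    intro x
    unfold fmuStar
    congr 1
    ext v
    simp only [Set.mem_range]
    exact ⟨fun ⟨y, hy⟩ => ⟨y, by rw [hgeq]; exact hy⟩, fun ⟨y, hy⟩ => ⟨y, by rw [← hgeq]; exact hy⟩⟩
  have hgc : ∀ x : Evec m, Continuous fun y => g x y := by
    intro x
    have : (fun y => g x y) = fun y : Evec n => f x y + μ / 2 * ‖y‖ ^ 2 := by
      ext y; rw [hgeq]
    rw [this]
    exact (hfc.comp (Continuous.prodMk_right x)).add (continuous_const.mul (continuous_norm.pow 2))
  have hz' : {y : Evec n | ∀ y' : Evec n, g xbar y ≤ g xbar y'} = {zstar} := by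
    rw [← hz]
    ext y
    simp only [Set.mem_setOf_eq, hgeq]
  have hzmin : ∀ y', g xbar zstar ≤ g xbar y' := by
    have h1 : zstar ∈ ({zstar} : Set (Evec n)) := rfl
    rw [← hz'] at h1
    exact h1
  have hglb : ∀ x y, c + μ / 2 * ‖y‖ ^ 2 ≤ g x y := by
    intro x y
    have := hc x y
    rw [hgeq]
    linarith
  have hglb' : ∀ x y, c ≤ g x y := by
    intro x y
    have h1 := hglb x y
    have h2 : 0 ≤ μ / 2 * ‖y‖ ^ 2 := by positivity
    linarith
  have hbdd : ∀ x, BddBelow (Set.range fun y : Evec n => g x y) := by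
    intro x
    exact ⟨c, by rintro _ ⟨y, rfl⟩; exact hglb' x y⟩
  have hfmu_le : ∀ x y, fmuStar f μ x ≤ g x y := by
    intro x y
    rw [hfmu]
    exact csInf_le (hbdd x) ⟨y, rfl⟩
  have hfmu_eq : ∀ (x) (y₀ : Evec n), (∀ y', g x y₀ ≤ g x y') → fmuStar f μ x = g x y₀ := by
    intro x y₀ h
    refine le_antisymm (hfmu_le x y₀) ?_
    rw [hfmu]
    refine le_csInf ⟨g x y₀, y₀, rfl⟩ ?_
    rintro _ ⟨y, rfl⟩
    exact h y
  -- minimizer selection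
  have hselex : ∀ x : Evec m, ∃ y : Evec n, ∀ y', g x y ≤ g x y' := by
    intro x
    obtain ⟨y, hy⟩ := aux_exists_min (f x) (hfc.comp (Continuous.prodMk_right x)) (hc x) hμ
    exact ⟨y, fun y' => by rw [hgeq, hgeq]; exact hy y'⟩
  choose sel hsel using hselex
  -- partial derivative in x
  set A : Evec m × Evec n → (Evec m →L[ℝ] ℝ) := fun p =>
    (fderiv ℝ (fun q : Evec m × Evec n => f q.1 q.2) p).comp
      (ContinuousLinearMap.inl ℝ (Evec m) (Evec n)) with hAdef
  clear_value A
  have hA_cont : Continuous A := by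
    rw [hAdef]
    exact Continuous.clm_comp (hf.continuous_fderiv one_ne_zero) continuous_const
  have hA : ∀ (z : Evec m) (y : Evec n), HasFDerivAt (fun x => f x y) (A (z, y)) z := by
    intro z y
    rw [hAdef]
    exact ((hf.differentiable one_ne_zero) (z, y)).hasFDerivAt.comp (f := fun e : Evec m => (e, y)) z
      (hasFDerivAt_prodMk_left z y)
  -- reduce to HasFDerivAt with A (xbar, zstar)
  have hgrad : (InnerProductSpace.toDual ℝ (Evec m)) (gradient (fun x => f x zstar) xbar)
      = A (xbar, zstar) := by
    rw [gradient, (hA xbar zstar).fderiv]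
    exact (InnerProductSpace.toDual ℝ (Evec m)).apply_symm_apply _
  rw [hasGradientAt_iff_hasFDerivAt, hgrad]
  rw [hasFDerivAt_iff_isLittleO, Asymptotics.isLittleO_iff]
  intro ε hε
  -- bound for the selection on the unit ball
  have hgzc : Continuous fun x : Evec m => g x zstar := by
    have he : (fun x : Evec m => g x zstar)
        = fun x : Evec m => f x zstar + μ / 2 * ‖zstar‖ ^ 2 := by
      ext x; rw [hgeq]
    rw [he]
    exact (hfc.comp (continuous_id.prodMk continuous_const)).add continuous_const
  obtain ⟨x₁, hx₁mem, hx₁⟩ := (isCompact_closedBall xbar 1).exists_isMaxOn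
    ⟨xbar, Metric.mem_closedBall_self zero_le_one⟩ hgzc.continuousOn
  set M₁ : ℝ := g x₁ zstar with hM₁def
  clear_value M₁
  have hM₁ : ∀ x ∈ Metric.closedBall xbar 1, g x zstar ≤ M₁ := fun x hx => hM₁def ▸ hx₁ hx
  have hM₁c : c ≤ M₁ := hM₁def ▸ hglb' x₁ zstar
  set R : ℝ := Real.sqrt (2 * (M₁ - c) / μ) with hRdef
  clear_value R
  have hR0 : 0 ≤ R := hRdef ▸ Real.sqrt_nonneg _
  have hnormR : ∀ y : Evec n, μ / 2 * ‖y‖ ^ 2 ≤ M₁ - c → y ∈ Metric.closedBall (0 : Evec n) R := by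
    intro y hy
    rw [Metric.mem_closedBall, dist_zero_right]
    have harg : 0 ≤ 2 * (M₁ - c) / μ := div_nonneg (by linarith) hμ.le
    have hRsq' : R ^ 2 = 2 * (M₁ - c) / μ := by rw [hRdef]; exact Real.sq_sqrt harg
    have hy2 : ‖y‖ ^ 2 ≤ R ^ 2 := by
      rw [hRsq', le_div_iff₀ hμ]
      nlinarith
    nlinarith [norm_nonneg y]
  have hselK : ∀ x ∈ Metric.closedBall xbar 1, sel x ∈ Metric.closedBall (0 : Evec n) R := by
    intro x hx
    apply hnormR
    have h1 : g x (sel x) ≤ g x zstar := hsel x zstar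
    have h2 := hglb x (sel x)
    have h3 := hM₁ x hx
    linarith
  have hzK : zstar ∈ Metric.closedBall (0 : Evec n) R := by
    apply hnormR
    have h2 := hglb xbar zstar
    have h3 := hM₁ xbar (Metric.mem_closedBall_self zero_le_one)
    linarith
  -- uniform bound M on ‖A‖ over the compact product
  obtain ⟨p₁, hp₁mem, hp₁⟩ := ((isCompact_closedBall xbar 1).prod
    (isCompact_closedBall (0 : Evec n) R)).exists_isMaxOn
    ⟨(xbar, zstar), ⟨Metric.mem_closedBall_self zero_le_one, hzK⟩⟩
    hA_cont.norm.continuousOn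
  set M : ℝ := ‖A p₁‖ with hMdef
  clear_value M
  have hM0 : 0 ≤ M := hMdef ▸ norm_nonneg _
  have hMbound : ∀ z ∈ Metric.closedBall xbar 1, ∀ y ∈ Metric.closedBall (0 : Evec n) R,
      ‖A (z, y)‖ ≤ M := by
    intro z hz y hy
    exact hMdef ▸ hp₁ (Set.mk_mem_prod hz hy)
  -- Lipschitz-type bound for f in x, uniformly over y ∈ K
  have hLip : ∀ x ∈ Metric.closedBall xbar 1, ∀ y ∈ Metric.closedBall (0 : Evec n) R,
      |f x y - f xbar y| ≤ M * ‖x - xbar‖ := by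
    intro x hx y hy
    have := Convex.norm_image_sub_le_of_norm_hasFDerivWithin_le
      (f := fun x => f x y) (f' := fun z => A (z, y)) (s := Metric.closedBall xbar 1)
      (fun z hz => (hA z y).hasFDerivWithinAt)
      (fun z hz => hMbound z hz y hy)
      (convex_closedBall xbar 1) (Metric.mem_closedBall_self zero_le_one) hx
    simpa [Real.norm_eq_abs] using this
  -- continuity of A at (xbar, zstar)
  obtain ⟨δ₁, hδ₁pos, hδ₁⟩ := Metric.continuousAt_iff.mp hA_cont.continuousAt ε hε
  -- the gap η on K \ ball zstar (δ₁/2)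
  set S : Set (Evec n) := Metric.closedBall (0 : Evec n) R \ Metric.ball zstar (δ₁ / 2) with hSdef
  clear_value S
  have hScompact : IsCompact S := hSdef ▸ (isCompact_closedBall _ _).diff Metric.isOpen_ball
  have hSmem : ∀ y : Evec n, y ∈ Metric.closedBall (0 : Evec n) R →
      y ∉ Metric.ball zstar (δ₁ / 2) → y ∈ S := by
    intro y h1 h2; rw [hSdef]; exact ⟨h1, h2⟩
  have hη : ∃ η > 0, ∀ y ∈ S, fmuStar f μ xbar + η ≤ g xbar y := by
    rcases S.eq_empty_or_nonempty with hS | hS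
    · exact ⟨1, one_pos, by rw [hS]; simp⟩
    · obtain ⟨y₁, hy₁S, hy₁min⟩ := hScompact.exists_isMinOn hS (hgc xbar).continuousOn
      have hy₁ne : y₁ ≠ zstar := by
        intro h
        rw [hSdef] at hy₁S
        exact hy₁S.2 (by rw [h]; exact Metric.mem_ball_self (by positivity))
      have hnotmin : ¬ (∀ y', g xbar y₁ ≤ g xbar y') := by
        intro hmem
        exact hy₁ne (hz' ▸ hmem : y₁ ∈ ({zstar} : Set (Evec n)))
      push_neg at hnotmin
      obtain ⟨y', hy'⟩ := hnotmin
      refine ⟨g xbar y₁ - fmuStar f μ xbar, ?_, ?_⟩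
      · have h1 : fmuStar f μ xbar ≤ g xbar y' := hfmu_le _ _
        linarith
      · intro y hy
        have := hy₁min hy
        simp only [Set.mem_setOf_eq] at this
        linarith
  obtain ⟨η, hηpos, hη⟩ := hη
  set δ₂ : ℝ := min 1 (η / (3 * (M + 1))) with hδ₂def
  clear_value δ₂
  have hδ₂pos : 0 < δ₂ := hδ₂def ▸ lt_min one_pos (by positivity)
  have hδ₂le1 : δ₂ ≤ 1 := hδ₂def ▸ min_le_left _ _
  have hδ₂le2 : δ₂ ≤ η / (3 * (M + 1)) := hδ₂def ▸ min_le_right _ _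
  -- selection converges into ball zstar (δ₁/2)
  have hsel_close : ∀ x : Evec m, dist x xbar ≤ δ₂ → sel x ∈ Metric.ball zstar (δ₁ / 2) := by
    intro x hx
    have hx1 : x ∈ Metric.closedBall xbar 1 :=
      Metric.mem_closedBall.mpr (le_trans hx hδ₂le1)
    by_contra hnot
    have hxS : sel x ∈ S := hSmem _ (hselK x hx1) hnot
    have hgap := hη (sel x) hxS
    have hnx : ‖x - xbar‖ ≤ δ₂ := by rwa [← dist_eq_norm]
    have hMd : M * ‖x - xbar‖ ≤ η / 3 := by
      have h1 : ‖x - xbar‖ ≤ η / (3 * (M + 1)) := le_trans hnx hδ₂le2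
      have h2 : M * ‖x - xbar‖ ≤ M * (η / (3 * (M + 1))) :=
        mul_le_mul_of_nonneg_left h1 hM0
      have h3 : M * (η / (3 * (M + 1))) ≤ η / 3 := by
        rw [← mul_div_assoc, div_le_div_iff₀ (by positivity) (by norm_num : (0:ℝ) < 3)]
        nlinarith
      linarith
    have hL1 := hLip x hx1 (sel x) (hselK x hx1)
    have hL2 := hLip x hx1 zstar hzK
    have he1 : fmuStar f μ x = g x (sel x) := hfmu_eq x (sel x) (hsel x)
    have he2 : fmuStar f μ xbar = g xbar zstar := hfmu_eq xbar zstar hzmin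
    have hub : fmuStar f μ x ≤ g x zstar := hfmu_le x zstar
    have hd1 : |g x (sel x) - g xbar (sel x)| ≤ M * ‖x - xbar‖ := by
      rw [hgeq, hgeq]
      have : f x (sel x) + μ / 2 * ‖sel x‖ ^ 2 - (f xbar (sel x) + μ / 2 * ‖sel x‖ ^ 2)
          = f x (sel x) - f xbar (sel x) := by ring
      rw [this]
      exact hL1
    have hd2 : |g x zstar - g xbar zstar| ≤ M * ‖x - xbar‖ := by
      rw [hgeq, hgeq]
      have : f x zstar + μ / 2 * ‖zstar‖ ^ 2 - (f xbar zstar + μ / 2 * ‖zstar‖ ^ 2)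
          = f x zstar - f xbar zstar := by ring
      rw [this]
      exact hL2
    rw [abs_le] at hd1 hd2
    linarith [hd1.1, hd2.2]
  -- final estimate
  rw [Metric.eventually_nhds_iff]
  refine ⟨min δ₂ (δ₁ / 2), lt_min hδ₂pos (by positivity), ?_⟩
  intro x hx
  have hxδ₂ : dist x xbar ≤ δ₂ := le_of_lt (lt_of_lt_of_le hx (min_le_left _ _))
  have hxδ₁ : dist x xbar < δ₁ / 2 := lt_of_lt_of_le hx (min_le_right _ _)
  have hxs : x ∈ Metric.closedBall xbar (δ₁ / 2) := Metric.mem_closedBall.mpr (le_of_lt hxδ₁)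
  have key : ∀ y : Evec n, dist y zstar < δ₁ →
      |f x y - f xbar y - (A (xbar, zstar)) (x - xbar)| ≤ ε * ‖x - xbar‖ := by
    intro y hy
    have := Convex.norm_image_sub_le_of_norm_hasFDerivWithin_le'
      (f := fun x' => f x' y) (f' := fun z => A (z, y)) (φ := A (xbar, zstar))
      (s := Metric.closedBall xbar (δ₁ / 2))
      (fun z hz => (hA z y).hasFDerivWithinAt)
      (fun z hz => by
        have hd : dist (z, y) (xbar, zstar) < δ₁ := by
          rw [Prod.dist_eq]
          exact max_lt (lt_of_le_of_lt (Metric.mem_closedBall.mp hz) (by linarith)) hy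
        have := hδ₁ hd
        rw [dist_eq_norm] at this
        exact le_of_lt this)
      (convex_closedBall xbar (δ₁ / 2))
      (Metric.mem_closedBall_self (by positivity)) hxs
    simpa [Real.norm_eq_abs] using this
  have k1 := key zstar (by simp [hδ₁pos])
  have k2 := key (sel x) (by
    have := hsel_close x hxδ₂
    rw [Metric.mem_ball] at this
    linarith)
  have he1 : fmuStar f μ x = g x (sel x) := hfmu_eq x (sel x) (hsel x)
  have he2 : fmuStar f μ xbar = g xbar zstar := hfmu_eq xbar zstar hzmin
  have hub : fmuStar f μ x - fmuStar f μ xbar ≤ f x zstar - f xbar zstar := by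
    have h1 : fmuStar f μ x ≤ g x zstar := hfmu_le x zstar
    rw [he2, hgeq]
    rw [hgeq] at h1
    linarith
  have hlb : f x (sel x) - f xbar (sel x) ≤ fmuStar f μ x - fmuStar f μ xbar := by
    have h1 : fmuStar f μ xbar ≤ g xbar (sel x) := hfmu_le xbar (sel x)
    rw [he1, hgeq]
    rw [hgeq] at h1
    linarith
  rw [abs_le] at k1 k2
  rw [Real.norm_eq_abs, abs_le]
  constructor
  · linarith [k2.1]
  · linarith [k1.2]
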